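/- arXiv:2506.21505 — 2 statements merged into one kernel-verified Lean document; each statement's English description precedes it below -/
import Mathlib

section
/- Let k be a field and B the exterior algebra on a 3-dimensional space with basis x₁,x₂,x₃. For k ≥ 1 define β_k as the b_{k-1} × b_k matrix (b_j = C(j+2,2)) indexed by nondecreasing words of lengths k-1 and k in {1,2,3}, with entry x_u in position (v₁…v_{k-1}, [v₁…v_{k-1}u]) and 0 elsewhere; define β'_{k+1} as the b_k × b_{k-1} matrix with entry x_{u'} ∧ x_{u''} in position ([v₁…v_{k-1}u], v₁…v_{k-1}) (where {u',u''} = {1,2,3}\{u}, u'<u''). Then β_k β'_{k+1} = (x₁∧x₂∧x₃) · I_{b_{k-1}} as matrices over B. -/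
/-!
Summing over the middle index, the `(v, v')` entry of `β_k β'_{k+1}` is the sum, over the pairs
`(a, c)` with `a ::ₛ v = c ::ₛ v'`, of `x_a ∧ x_{c'} ∧ x_{c''}`. For `a ≠ c` this wedge contains
`x_a` twice and vanishes; for `a = c` the condition forces `v = v'`, and
`∑_a x_a ∧ x_{a'} ∧ x_{a''} = ω - ω + ω` with `ω = x₁∧x₂∧x₃` by anticommutativity.
-/

open scoped Matrix

namespace Sym

variable {α R : Type*} [Fintype α] [DecidableEq α] [NonUnitalNonAssocSemiring R]

def consMatrix (n : ℕ) (f : α → R) : Matrix (Sym α n) (Sym α (n + 1)) R :=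
  Matrix.of fun v u => ∑ a, if u = a ::ₛ v then f a else 0

theorem consMatrix_mul_transpose_consMatrix {n : ℕ} (f g : α → R)
    (hfg : ∀ a c, a ≠ c → f a * g c = 0) :
    consMatrix n f * (consMatrix n g)ᵀ = Matrix.diagonal fun _ => ∑ a, f a * g a := by
  ext v v'
  have hterm : ∀ a c, (if c ::ₛ v' = a ::ₛ v then f a * g c else 0) =
      if v = v' then (if a = c then f a * g a else 0) else 0 := by
    intro a c
    by_cases hac : a = c
    · subst hac
      simp only [cons_inj_right, eq_comm (a := v'), ite_true]
    · simp [hfg a c hac, hac]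
  simp only [Matrix.mul_apply, Matrix.transpose_apply, consMatrix, Matrix.of_apply,
    Finset.sum_mul, Finset.mul_sum, ite_mul, mul_ite, zero_mul, mul_zero]
  rw [Finset.sum_comm]
  simp only [Finset.sum_ite_eq', Finset.mem_univ, if_true, hterm, Matrix.diagonal_apply]
  split_ifs <;> simp

end Sym

def complPair : Fin 3 → Fin 3 × Fin 3 := ![(1, 2), (0, 2), (0, 1)]

namespace ExteriorAlgebra

variable {R M : Type*} [CommRing R] [AddCommGroup M] [Module R M]

theorem ι_mul_ι_eq_neg (x y : M) : ι R x * ι R y = -(ι R y * ι R x) :=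
  eq_neg_of_add_eq_zero_left (ι_add_mul_swap x y)

theorem ι_mul_ι_mul_ι_self_left (x y : M) : ι R x * (ι R x * ι R y) = 0 := by
  rw [← mul_assoc, ι_sq_zero, zero_mul]

theorem ι_mul_ι_mul_ι_self_right (x y : M) : ι R x * (ι R y * ι R x) = 0 := by
  rw [← mul_assoc, ι_mul_ι_eq_neg, neg_mul, mul_assoc, ι_sq_zero, mul_zero, neg_zero]

theorem ι_mul_ι_complPair_eq_zero (x : Fin 3 → M) {a c : Fin 3} (hac : a ≠ c) :
    ι R (x a) * (ι R (x (complPair c).1) * ι R (x (complPair c).2)) = 0 := by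
  fin_cases a <;> fin_cases c
  all_goals first
    | exact absurd rfl hac
    | exact ι_mul_ι_mul_ι_self_left _ _
    | exact ι_mul_ι_mul_ι_self_right _ _

theorem sum_ι_mul_ι_complPair (x : Fin 3 → M) :
    ∑ a, ι R (x a) * (ι R (x (complPair a).1) * ι R (x (complPair a).2)) =
      ι R (x 0) * ι R (x 1) * ι R (x 2) := by
  have h1 : ι R (x 1) * (ι R (x 0) * ι R (x 2)) = -(ι R (x 0) * (ι R (x 1) * ι R (x 2))) := by
    rw [← mul_assoc, ι_mul_ι_eq_neg, neg_mul, mul_assoc]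
  have h2 : ι R (x 2) * (ι R (x 0) * ι R (x 1)) = ι R (x 0) * (ι R (x 1) * ι R (x 2)) := by
    rw [← mul_assoc, ι_mul_ι_eq_neg, neg_mul, mul_assoc, ι_mul_ι_eq_neg (x 2), mul_neg, neg_neg]
  rw [Fin.sum_univ_three]
  change ι R (x 0) * (ι R (x 1) * ι R (x 2)) + ι R (x 1) * (ι R (x 0) * ι R (x 2)) +
    ι R (x 2) * (ι R (x 0) * ι R (x 1)) = _
  rw [h1, h2, mul_assoc]
  abel

end ExteriorAlgebra

/-- The matrix identity `β_k β'_{k+1} = (x₁∧x₂∧x₃) · I` over the exterior algebra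
`B = Λ(k³)`.  Nondecreasing words of length `k` in `{1,2,3}` are identified with
multisets of size `k`, i.e. with elements of `Sym (Fin 3) k`; the word `[v₁…v_{k-1}u]`
is the multiset `u ::ₛ v`.  Here `m = k - 1`, `β` is `β_k` and `β'` is `β'_{k+1}`. -/
theorem stmt_10 (K : Type*) [Field K] (V : Type*) [AddCommGroup V] [Module K V]
    (b : Module.Basis (Fin 3) K V) (m : ℕ)
    (z : Fin 3 → ExteriorAlgebra K V) (hz : ∀ i, z i = ExteriorAlgebra.ι K (b i))
    -- for `a ∈ {1,2,3}`, `compl a = (a', a'')` is `{1,2,3} \ {a}` with `a' < a''`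
    (compl : Fin 3 → Fin 3 × Fin 3) (hcompl : compl = ![(1, 2), (0, 2), (0, 1)])
    (β : Matrix (Sym (Fin 3) m) (Sym (Fin 3) (m + 1)) (ExteriorAlgebra K V))
    (hβ : ∀ v u, β v u = ∑ a : Fin 3, if u = a ::ₛ v then z a else 0)
    (β' : Matrix (Sym (Fin 3) (m + 1)) (Sym (Fin 3) m) (ExteriorAlgebra K V))
    (hβ' : ∀ w v, β' w v =
      ∑ a : Fin 3, if w = a ::ₛ v then z (compl a).1 * z (compl a).2 else 0) :
    β * β' = Matrix.diagonal (fun _ => z 0 * z 1 * z 2) := by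
  obtain rfl : compl = complPair := hcompl
  obtain rfl : β = Sym.consMatrix m z := Matrix.ext hβ
  obtain rfl : β' = (Sym.consMatrix m fun a => z (complPair a).1 * z (complPair a).2)ᵀ :=
    Matrix.ext hβ'
  obtain rfl : z = fun i => ExteriorAlgebra.ι K (b i) := funext hz
  rw [Sym.consMatrix_mul_transpose_consMatrix _ _
      fun _ _ hac => ExteriorAlgebra.ι_mul_ι_complPair_eq_zero b hac,
    ExteriorAlgebra.sum_ι_mul_ι_complPair]
end

section
/- Let a₁, a₂, a₃ be integers. Define power series over ℚ: D(t) = (1-t)³ - t(a₁-3), f(t) = 1/D(t), g(t) = (t² + t(a₂-3))/D(t), h(t) = t·a₃/D(t), and L(t,z) = f(tz) + z·g(tz) + z²·h(tz) (as a power series in t with coefficients polynomials in z). Then f(tz)/(1 - z·g(tz) - z²·h(tz)) = 1/(1 - a₁tz - (a₂-3)tz² + 3t²z² - a₃tz³ - t²z³ - t³z³). -/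
namespace MvPowerSeries

variable {σ k : Type*} [Field k]

/-- No condition on `D - p` is needed: both sides vanish when its constant coefficient does. -/
theorem inv_mul_inv_one_sub_mul_inv (D p : MvPowerSeries σ k) (hD : constantCoeff D ≠ 0) :
    D⁻¹ * (1 - p * D⁻¹)⁻¹ = (D - p)⁻¹ := by
  rw [← MvPowerSeries.mul_inv_rev, sub_mul, one_mul, mul_assoc, MvPowerSeries.inv_mul_cancel D hD,
    mul_one]

end MvPowerSeries

open MvPowerSeries in
theorem stmt_12_general (a₁ a₂ a₃ : ℤ)
    (t z D f g h : MvPowerSeries (Fin 2) ℚ)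
    (ht : t = MvPowerSeries.X 0)
    (hD : D = (1 - t * z) ^ 3 - t * z * (MvPowerSeries.C : ℚ →+* MvPowerSeries (Fin 2) ℚ) ((a₁ : ℚ) - 3))
    (hf : f = D⁻¹)
    (hg : g = (t ^ 2 * z ^ 2 + t * z * (MvPowerSeries.C : ℚ →+* MvPowerSeries (Fin 2) ℚ) ((a₂ : ℚ) - 3)) * D⁻¹)
    (hh : h = t * z * (MvPowerSeries.C : ℚ →+* MvPowerSeries (Fin 2) ℚ) (a₃ : ℚ) * D⁻¹) :
    f * (1 - z * g - z ^ 2 * h)⁻¹ =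
      (1 - (MvPowerSeries.C : ℚ →+* MvPowerSeries (Fin 2) ℚ) (a₁ : ℚ) * t * z
         - (MvPowerSeries.C : ℚ →+* MvPowerSeries (Fin 2) ℚ) ((a₂ : ℚ) - 3) * t * z ^ 2
         + 3 * t ^ 2 * z ^ 2
         - (MvPowerSeries.C : ℚ →+* MvPowerSeries (Fin 2) ℚ) (a₃ : ℚ) * t * z ^ 3
         - t ^ 2 * z ^ 3 - t ^ 3 * z ^ 3)⁻¹ := by
  have hD0 : constantCoeff D ≠ 0 := by simp [hD, ht]
  have hgh : 1 - z * g - z ^ 2 * h =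
      1 - (z * (t ^ 2 * z ^ 2 + t * z * C ((a₂ : ℚ) - 3)) + z ^ 2 * (t * z * C (a₃ : ℚ))) * D⁻¹ := by
    rw [hg, hh]; ring
  rw [hf, hgh, inv_mul_inv_one_sub_mul_inv D _ hD0, hD]
  congr 1
  simp only [map_sub, map_intCast, map_ofNat]
  ring

/-- The algebraic core of the Poincaré series computation for class T:
`f(tz)/(1 - z·g(tz) - z²·h(tz)) = 1/(1 - a₁tz - (a₂-3)tz² + 3t²z² - a₃tz³ - t²z³ - t³z³)`
in `ℚ[[t,z]]`, where `D(t) = (1-t)³ - t(a₁-3)`, `f = 1/D`, `g = (t² + t(a₂-3))/D`,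
`h = t·a₃/D`. -/
theorem stmt_12 (a₁ a₂ a₃ : ℤ)
    (t z D f g h : MvPowerSeries (Fin 2) ℚ)
    (ht : t = MvPowerSeries.X 0) (hz : z = MvPowerSeries.X 1)
    (hD : D = (1 - t * z) ^ 3 - t * z * (MvPowerSeries.C : ℚ →+* MvPowerSeries (Fin 2) ℚ) ((a₁ : ℚ) - 3))
    (hf : f = D⁻¹)
    (hg : g = (t ^ 2 * z ^ 2 + t * z * (MvPowerSeries.C : ℚ →+* MvPowerSeries (Fin 2) ℚ) ((a₂ : ℚ) - 3)) * D⁻¹)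
    (hh : h = t * z * (MvPowerSeries.C : ℚ →+* MvPowerSeries (Fin 2) ℚ) (a₃ : ℚ) * D⁻¹) :
    f * (1 - z * g - z ^ 2 * h)⁻¹ =
      (1 - (MvPowerSeries.C : ℚ →+* MvPowerSeries (Fin 2) ℚ) (a₁ : ℚ) * t * z
         - (MvPowerSeries.C : ℚ →+* MvPowerSeries (Fin 2) ℚ) ((a₂ : ℚ) - 3) * t * z ^ 2
         + 3 * t ^ 2 * z ^ 2
         - (MvPowerSeries.C : ℚ →+* MvPowerSeries (Fin 2) ℚ) (a₃ : ℚ) * t * z ^ 3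
         - t ^ 2 * z ^ 3 - t ^ 3 * z ^ 3)⁻¹ :=
  stmt_12_general a₁ a₂ a₃ t z D f g h ht hD hf hg hh
end
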